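/- Fix positions Pos : ℕ → ℝ with Pos(1) ≤ … ≤ Pos(n), let f_P be the push-reach function and g_P the reverse push-reach function, and fix p with 1 ≤ p < n. If there exist powers Q ≤ Q' such that f_Q(p) < g_Q(p+1) and f_{Q'}(p) ≥ g_{Q'}(p+1), then there exists a unique real P such that f_P(p) = g_P(p+1), and this P satisfies Q < P ≤ Q'. -/

import Mathlib

/-- The push-reach function `Reach_LR`: `pushReach Pos P q` is the rightmost point to
which agents `a_1, …, a_q`, each with power `P`, can carry the information of `a_1`. -/
def pushReach (Pos : ℕ → ℝ) (P : ℝ) : ℕ → ℝ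
  | 0 => Pos 1 + P
  | 1 => Pos 1 + P
  | (i + 2) => P + 2 * min (pushReach Pos P (i + 1)) (Pos (i + 2)) - Pos (i + 2)

/-- Auxiliary function for the reverse push-reach, by recursion on the distance from `n`. -/
def revPushReachAux (Pos : ℕ → ℝ) (P : ℝ) (n : ℕ) : ℕ → ℝ
  | 0 => Pos n - P
  | (j + 1) => 2 * max (revPushReachAux Pos P n j) (Pos (n - (j + 1))) - P - Pos (n - (j + 1))

/-- The reverse push-reach function `Reach_RL`: `revPushReach Pos P n q` is the leftmost
point to which agents `a_q, …, a_n`, each with power `P`, can carry the information of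
`a_n`. -/
def revPushReach (Pos : ℕ → ℝ) (P : ℝ) (n q : ℕ) : ℝ :=
  revPushReachAux Pos P n (n - q)

lemma pushReach_gap (Pos : ℕ → ℝ) {P P' : ℝ} (h : P ≤ P') :
    ∀ q, pushReach Pos P q + (P' - P) ≤ pushReach Pos P' q := by
  intro q
  induction q with
  | zero => simp only [pushReach]; linarith
  | succ q ih =>
    match q with
    | 0 => simp only [pushReach]; linarith
    | (i + 1) =>
      have hmin : min (pushReach Pos P (i + 1)) (Pos (i + 2)) ≤
          min (pushReach Pos P' (i + 1)) (Pos (i + 2)) := by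
        apply min_le_min _ le_rfl
        have := ih
        linarith [sub_nonneg.mpr h]
      show pushReach Pos P (i + 2) + (P' - P) ≤ pushReach Pos P' (i + 2)
      simp only [pushReach]
      linarith

lemma revPushReachAux_gap (Pos : ℕ → ℝ) (n : ℕ) {P P' : ℝ} (h : P ≤ P') :
    ∀ j, revPushReachAux Pos P' n j ≤ revPushReachAux Pos P n j - (P' - P) := by
  intro j
  induction j with
  | zero => simp only [revPushReachAux]; linarith
  | succ j ih =>
    have hmax : max (revPushReachAux Pos P' n j) (Pos (n - (j + 1))) ≤
        max (revPushReachAux Pos P n j) (Pos (n - (j + 1))) := by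
      apply max_le_max _ le_rfl
      linarith [sub_nonneg.mpr h]
    simp only [revPushReachAux]
    linarith

lemma pushReach_cont (Pos : ℕ → ℝ) (q : ℕ) :
    Continuous (fun P : ℝ => pushReach Pos P q) := by
  induction q with
  | zero => simpa only [pushReach] using (continuous_add_left (Pos 1))
  | succ q ih =>
    match q with
    | 0 => simpa only [pushReach] using (continuous_add_left (Pos 1))
    | (i + 1) =>
      show Continuous fun P : ℝ => pushReach Pos P (i + 2)
      simp only [pushReach]
      exact ((continuous_id.add (continuous_const.mul (ih.min continuous_const))).sub
        continuous_const)

lemma revPushReachAux_cont (Pos : ℕ → ℝ) (n j : ℕ) :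
    Continuous (fun P : ℝ => revPushReachAux Pos P n j) := by
  induction j with
  | zero => simpa only [revPushReachAux] using (continuous_sub_left (Pos n))
  | succ j ih =>
    simp only [revPushReachAux]
    exact (((continuous_const.mul (ih.max continuous_const)).sub continuous_id).sub
      continuous_const)

/-- if for some powers `Q ≤ Q'` we have `Reach_LR(p,Q) < Reach_RL(p+1,Q)`
and `Reach_LR(p,Q') ≥ Reach_RL(p+1,Q')`, then there is a unique power `P` with
`Reach_LR(p,P) = Reach_RL(p+1,P)`, and it satisfies `Q < P ≤ Q'`. -/
theorem stmt6 (Pos : ℕ → ℝ) (n : ℕ)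
    (hmono : ∀ i, 1 ≤ i → i < n → Pos i ≤ Pos (i + 1))
    (p : ℕ) (hp : 1 ≤ p) (hpn : p < n)
    (Q Q' : ℝ) (hQQ' : Q ≤ Q')
    (hQ : pushReach Pos Q p < revPushReach Pos Q n (p + 1))
    (hQ' : pushReach Pos Q' p ≥ revPushReach Pos Q' n (p + 1)) :
    (∃! P : ℝ, pushReach Pos P p = revPushReach Pos P n (p + 1)) ∧
    (∀ P : ℝ, pushReach Pos P p = revPushReach Pos P n (p + 1) → Q < P ∧ P ≤ Q') := by
  set h : ℝ → ℝ := fun P => pushReach Pos P p - revPushReach Pos P n (p + 1) with hh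
  have hcont : Continuous h :=
    (pushReach_cont Pos p).sub (revPushReachAux_cont Pos n (n - (p + 1)))
  have hsm : StrictMono h := by
    intro A B hAB
    have h1 := pushReach_gap Pos (le_of_lt hAB) p
    have h2 := revPushReachAux_gap Pos n (le_of_lt hAB) (n - (p + 1))
    simp only [hh, revPushReach]
    have : B - A > 0 := by linarith
    linarith
  have hQ0 : h Q < 0 := by simp only [hh]; linarith
  have hQ'0 : 0 ≤ h Q' := by simp only [hh]; linarith
  obtain ⟨P, hPmem, hP0⟩ := intermediate_value_Icc hQQ' hcont.continuousOn
    (Set.mem_Icc.mpr ⟨le_of_lt hQ0, hQ'0⟩)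
  have key : ∀ R : ℝ, pushReach Pos R p = revPushReach Pos R n (p + 1) → Q < R ∧ R ≤ Q' := by
    intro R hR
    have hR0 : h R = 0 := by simp [hh, hR]
    constructor
    · by_contra hc
      push_neg at hc
      rcases lt_or_eq_of_le hc with hlt | heq
      · have := hsm hlt; rw [hR0] at this; linarith
      · rw [heq] at hR0; linarith
    · by_contra hc
      push_neg at hc
      have := hsm hc; rw [hR0] at this; linarith
  refine ⟨⟨P, ?_, ?_⟩, key⟩
  · have : pushReach Pos P p - revPushReach Pos P n (p + 1) = 0 := hP0
    linarith
  · intro R hR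
    have hR0 : h R = 0 := by simp [hh, hR]
    exact hsm.injective (by rw [hR0, hP0])
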